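/- Fix n ∈ ℕ, m ∈ ℝⁿ, a positive semidefinite matrix Σ ∈ ℝⁿˣⁿ, and α ∈ (0,1). Let 𝒫 be the set of probability measures μ on ℝⁿ with finite second moments, mean ∫ x dμ = m, and covariance ∫ (x − m)(x − m)ᵀ dμ = Σ, and let Z : ℝⁿ → ℝ be a measurable function integrable with respect to every μ ∈ 𝒫. Then the supremum over the ambiguity set and the infimum in the CVaR definition can be interchanged: sup_{μ ∈ 𝒫} inf_{s ∈ ℝ} ( s + α⁻¹ ∫ max(Z − s, 0) dμ ) = inf_{s ∈ ℝ} sup_{μ ∈ 𝒫} ( s + α⁻¹ ∫ max(Z − s, 0) dμ ). -/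

import Mathlib

/-
For each measure the objective `s ↦ s + α⁻¹ ∫ (Z - s)⁺ dμ` is convex, `(1 + α⁻¹)`-Lipschitz,
bounded below by `∫ Z dμ`, and, since `α < 1`, has compact sublevel sets; it is affine along
mixtures of measures, and the moment set is closed under mixtures. The nontrivial inequality
reduces to: if every `μ` has a point where its objective is `< θ`, then a single `s` has all
objectives `≤ θ`. By Helly's theorem on the line it suffices to treat two measures. If their
sublevel sets were disjoint, both objectives would exceed `θ` at a point `c` between them, with
subgradients of opposite signs at `c`; the mixture that cancels the subgradients then has a
horizontal supporting line at `c`, so it stays above `θ`, which is absurd. When the objectives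
are unbounded above, the uniform Lipschitz bound makes both sides the junk value `0`.
-/

open MeasureTheory Matrix

/-- The moment-based ambiguity set of probability measures on `ℝⁿ` with finite
second moments, mean `m`, and covariance matrix `S`. -/
def momentSet (n : ℕ) (m : Fin n → ℝ) (S : Matrix (Fin n) (Fin n) ℝ) :
    Set (Measure (Fin n → ℝ)) :=
  {μ | IsProbabilityMeasure μ ∧ Integrable (fun x => ‖x‖ ^ 2) μ ∧
    (∫ x, x ∂μ) = m ∧ ∀ i j, ∫ x, (x i - m i) * (x j - m j) ∂μ = S i j}

open Set

namespace ConvexOn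

variable {f f₁ f₂ : ℝ → ℝ}

lemma add_rightDeriv_mul_sub_le (hf : ConvexOn ℝ univ f) (c s : ℝ) :
    f c + derivWithin f (Ioi c) c * (s - c) ≤ f s := by
  have hc : c ∈ interior (univ : Set ℝ) := by simp
  rcases lt_trichotomy s c with hsc | rfl | hcs
  · have hslope := (hf.slope_le_leftDeriv_of_mem_interior (mem_univ s) hc hsc).trans
      (hf.leftDeriv_le_rightDeriv_of_mem_interior hc)
    rw [slope_def_field, div_le_iff₀ (sub_pos.2 hsc)] at hslope
    linarith
  · simp
  · have hslope := hf.rightDeriv_le_slope_of_mem_interior hc (mem_univ s) hcs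
    rw [slope_def_field, le_div_iff₀ (sub_pos.2 hcs)] at hslope
    linarith

lemma exists_mix_forall_gt (hf₁ : ConvexOn ℝ univ f₁) (hf₂ : ConvexOn ℝ univ f₂) {θ a b : ℝ}
    (hab : a < b) (ha : f₁ a ≤ θ) (hb : f₂ b ≤ θ) (hdisj : ∀ s, f₁ s ≤ θ → θ < f₂ s) :
    ∃ t ∈ Icc (0 : ℝ) 1, ∀ s, θ < (1 - t) * f₁ s + t * f₂ s := by
  obtain ⟨c, hc, hc₁, hc₂⟩ : ∃ c ∈ Icc a b, θ < f₁ c ∧ θ < f₂ c := by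
    by_contra! hcover
    have hclosed (g : ℝ → ℝ) (hg : ConvexOn ℝ univ g) : IsClosed {s | g s ≤ θ} :=
      isClosed_le (continuousOn_univ.1 (hg.continuousOn isOpen_univ)) continuous_const
    obtain ⟨s, -, hs₁, hs₂⟩ := isPreconnected_closed_iff.1 isPreconnected_Icc _ _
      (hclosed f₁ hf₁) (hclosed f₂ hf₂)
      (fun s hs => (le_or_gt (f₁ s) θ).imp id (hcover s hs))
      ⟨a, left_mem_Icc.2 hab.le, ha⟩ ⟨b, right_mem_Icc.2 hab.le, hb⟩
    exact (hdisj s hs₁).not_ge hs₂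
  set g₁ := derivWithin f₁ (Ioi c) c
  set g₂ := derivWithin f₂ (Ioi c) c
  -- `f₁` drops to `θ` left of `c` and `f₂` right of `c`, so their subgradients have opposite signs.
  have hg₁ : 0 < g₁ := by
    have := hf₁.add_rightDeriv_mul_sub_le c a
    have hac : a < c := lt_of_le_of_ne hc.1 (by rintro rfl; linarith)
    nlinarith
  have hg₂ : g₂ < 0 := by
    have := hf₂.add_rightDeriv_mul_sub_le c b
    have hcb : c < b := lt_of_le_of_ne hc.2 (by rintro rfl; linarith)
    nlinarith
  -- Mixing with weight `t` makes the supporting line of the mixture horizontal at height `> θ`.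
  set t := g₁ / (g₁ - g₂)
  have ht : t ∈ Icc (0 : ℝ) 1 := by
    constructor
    · exact div_nonneg hg₁.le (by linarith)
    · rw [div_le_one (by linarith)]; linarith
  refine ⟨t, ht, fun s => ?_⟩
  have hslope : (1 - t) * g₁ + t * g₂ = 0 := by
    have : g₁ - g₂ ≠ 0 := by linarith
    simp only [t]; field_simp; ring
  have hmid : θ < (1 - t) * f₁ c + t * f₂ c := by
    have := (convex_Ioi θ) hc₁ hc₂ (sub_nonneg.2 ht.2) ht.1 (by ring)
    simpa using this
  have h₁ := mul_le_mul_of_nonneg_left (hf₁.add_rightDeriv_mul_sub_le c s) (sub_nonneg.2 ht.2)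
  have h₂ := mul_le_mul_of_nonneg_left (hf₂.add_rightDeriv_mul_sub_le c s) ht.1
  linear_combination hmid + h₁ + h₂ - (s - c) * hslope

lemma exists_le_and_le_of_forall_exists_mix_le (hf₁ : ConvexOn ℝ univ f₁)
    (hf₂ : ConvexOn ℝ univ f₂) {θ : ℝ}
    (hmix : ∀ t ∈ Icc (0 : ℝ) 1, ∃ s, (1 - t) * f₁ s + t * f₂ s ≤ θ) :
    ∃ s, f₁ s ≤ θ ∧ f₂ s ≤ θ := by
  by_contra! hdisj
  obtain ⟨a, ha⟩ := hmix 0 (left_mem_Icc.2 zero_le_one)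
  obtain ⟨b, hb⟩ := hmix 1 (right_mem_Icc.2 zero_le_one)
  simp only [sub_zero, one_mul, zero_mul, add_zero, sub_self, zero_add] at ha hb
  rcases lt_or_gt_of_ne (show a ≠ b by rintro rfl; exact (hdisj a ha).not_ge hb) with hab | hba
  · obtain ⟨t, ht, hgt⟩ := exists_mix_forall_gt hf₁ hf₂ hab ha hb hdisj
    obtain ⟨s, hs⟩ := hmix t ht
    exact (hgt s).not_ge hs
  · obtain ⟨t, ht, hgt⟩ := exists_mix_forall_gt hf₂ hf₁ hba hb ha
      fun s h₂ => lt_of_not_ge fun h₁ => (hdisj s h₁).not_ge h₂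
    obtain ⟨s, hs⟩ := hmix (1 - t) ⟨sub_nonneg.2 ht.2, sub_le_self _ ht.1⟩
    have := hgt s
    linarith

end ConvexOn

lemma Convex.iInter_nonempty_of_inter_nonempty {ι : Type*} {F : ι → Set ℝ}
    (hconv : ∀ i, Convex ℝ (F i)) (hcomp : ∀ i, IsCompact (F i))
    (hpair : ∀ i j, (F i ∩ F j).Nonempty) : (⋂ i, F i).Nonempty := by
  classical
  refine Convex.helly_theorem_compact' hconv hcomp fun I hI => ?_
  rcases I.eq_empty_or_nonempty with rfl | ⟨i, hi⟩
  · simp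
  have : Nonempty ι := ⟨i⟩
  rw [Module.finrank_self, ← Finset.card_erase_add_one hi, add_le_add_iff_right,
    Finset.card_le_one_iff_subset_singleton] at hI
  obtain ⟨j, hj⟩ := hI
  refine (hpair i j).mono fun s hs => mem_iInter₂.2 fun k hk => ?_
  rcases eq_or_ne k i with rfl | hki
  · exact hs.1
  · rw [Finset.mem_singleton.1 (hj (Finset.mem_erase.2 ⟨hki, hk⟩))]
    exact hs.2

lemma ConvexOn.exists_forall_le_of_forall_exists_mix_le {ι : Type*} {f : ι → ℝ → ℝ} {θ : ℝ}
    (hconv : ∀ i, ConvexOn ℝ univ (f i)) (hbdd : ∀ i, Bornology.IsBounded {s | f i s ≤ θ})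
    (hmix : ∀ i j, ∀ t ∈ Icc (0 : ℝ) 1, ∃ s, (1 - t) * f i s + t * f j s ≤ θ) :
    ∃ s, ∀ i, f i s ≤ θ := by
  have hsub (i : ι) : {s | f i s ≤ θ} = {s | s ∈ univ ∧ f i s ≤ θ} := by simp
  obtain ⟨s, hs⟩ := Convex.iInter_nonempty_of_inter_nonempty (F := fun i => {s | f i s ≤ θ})
    (fun i => hsub i ▸ (hconv i).convex_le θ)
    (fun i => Metric.isCompact_of_isClosed_isBounded
      (isClosed_le (continuousOn_univ.1 ((hconv i).continuousOn isOpen_univ)) continuous_const)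
      (hbdd i))
    fun i j => (hconv i).exists_le_and_le_of_forall_exists_mix_le (hconv j) (hmix i j)
  exact ⟨s, fun i => mem_iInter.1 hs i⟩

theorem iSup_iInf_eq_iInf_iSup_of_forall_exists_lt {ι β : Type*} [PseudoMetricSpace β]
    [Nonempty β] (f : ι → β → ℝ) {K : NNReal} (hlip : ∀ i, LipschitzWith K (f i))
    (hbdd : ∀ i, BddBelow (range (f i)))
    (hsaddle : ∀ θ, (∀ i, ∃ s, f i s < θ) → ∃ s, ∀ i, f i s ≤ θ) :
    ⨆ i, ⨅ s, f i s = ⨅ s, ⨆ i, f i s := by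
  rcases isEmpty_or_nonempty ι with hι | hι
  · simp
  by_cases hB : ∃ s₀, BddAbove (range fun i => f i s₀)
  · obtain ⟨s₀, M, hM⟩ := hB
    have hB (s : β) : BddAbove (range fun i => f i s) := by
      refine ⟨M + K * dist s s₀, forall_mem_range.2 fun i => ?_⟩
      have := (hlip i).dist_le_mul s s₀
      rw [Real.dist_eq, abs_le] at this
      linarith [hM (mem_range_self i)]
    have hinf_le (i : ι) (s : β) : ⨅ s, f i s ≤ f i s := ciInf_le (hbdd i) s
    have hlhs : BddAbove (range fun i => ⨅ s, f i s) :=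
      ⟨M, forall_mem_range.2 fun i => (hinf_le i s₀).trans (hM (mem_range_self i))⟩
    have hrhs : BddBelow (range fun s => ⨆ i, f i s) := by
      obtain ⟨L, hL⟩ := hbdd hι.some
      exact ⟨L, forall_mem_range.2 fun s =>
        (hL (mem_range_self s)).trans (le_ciSup (hB s) hι.some)⟩
    refine le_antisymm (ciSup_le fun i => le_ciInf fun s => (hinf_le i s).trans
      (le_ciSup (hB s) i)) (le_of_forall_gt_imp_ge_of_dense fun θ hθ => ?_)
    obtain ⟨s, hs⟩ := hsaddle θ fun i =>
      exists_lt_of_ciInf_lt ((le_ciSup hlhs i).trans_lt hθ)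
    exact (ciInf_le hrhs s).trans (ciSup_le hs)
  · push Not at hB
    have hlhs : ¬BddAbove (range fun i => ⨅ s, f i s) := by
      rintro ⟨M, hM⟩
      obtain ⟨s, hs⟩ := hsaddle (M + 1) fun i =>
        exists_lt_of_ciInf_lt ((hM (mem_range_self i)).trans_lt (lt_add_one M))
      exact hB s ⟨M + 1, forall_mem_range.2 hs⟩
    simp only [Real.iSup_of_not_bddAbove hlhs, Real.iSup_of_not_bddAbove (hB _),
      Real.iInf_const_zero]

section Mixture

variable {X : Type*} [MeasurableSpace X]

noncomputable def mixture (t : ℝ) (μ ν : Measure X) : Measure X :=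
  ENNReal.ofReal (1 - t) • μ + ENNReal.ofReal t • ν

variable {μ ν : Measure X} {t : ℝ}

lemma isProbabilityMeasure_mixture [IsProbabilityMeasure μ] [IsProbabilityMeasure ν]
    (ht : t ∈ Icc (0 : ℝ) 1) : IsProbabilityMeasure (mixture t μ ν) := by
  constructor
  simp only [mixture, Measure.add_apply, Measure.smul_apply, measure_univ, smul_eq_mul, mul_one]
  rw [← ENNReal.ofReal_add (sub_nonneg.2 ht.2) ht.1]
  simp

variable {E : Type*} [NormedAddCommGroup E] {g : X → E}

lemma MeasureTheory.Integrable.mixture (hμ : Integrable g μ) (hν : Integrable g ν) :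
    Integrable g (mixture t μ ν) :=
  (hμ.smul_measure ENNReal.ofReal_ne_top).add_measure (hν.smul_measure ENNReal.ofReal_ne_top)

lemma integral_mixture [NormedSpace ℝ E] (ht : t ∈ Icc (0 : ℝ) 1) (hμ : Integrable g μ)
    (hν : Integrable g ν) :
    ∫ x, g x ∂(mixture t μ ν) = (1 - t) • ∫ x, g x ∂μ + t • ∫ x, g x ∂ν := by
  rw [mixture, integral_add_measure (hμ.smul_measure ENNReal.ofReal_ne_top)
    (hν.smul_measure ENNReal.ofReal_ne_top), integral_smul_measure, integral_smul_measure,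
    ENNReal.toReal_ofReal (sub_nonneg.2 ht.2), ENNReal.toReal_ofReal ht.1]

end Mixture

section CVaR

variable {X : Type*} [MeasurableSpace X] {α : ℝ} {Z : X → ℝ} {μ ν : Measure X}

noncomputable def cvarObjective (α : ℝ) (Z : X → ℝ) (μ : Measure X) (s : ℝ) : ℝ :=
  s + α⁻¹ * ∫ x, max (Z x - s) 0 ∂μ

lemma MeasureTheory.Integrable.posPart_sub_const [IsFiniteMeasure μ] (hZ : Integrable Z μ)
    (s : ℝ) :
    Integrable (fun x => max (Z x - s) 0) μ :=
  (hZ.sub (integrable_const s)).pos_part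

lemma le_cvarObjective (hα : 0 ≤ α) (s : ℝ) : s ≤ cvarObjective α Z μ s :=
  le_add_of_nonneg_right <| mul_nonneg (inv_nonneg.2 hα) <|
    integral_nonneg fun _ => le_max_right _ _

lemma add_inv_mul_integral_sub_le_cvarObjective [IsProbabilityMeasure μ] (hα : 0 ≤ α)
    (hZ : Integrable Z μ) (s : ℝ) :
    s + α⁻¹ * ((∫ x, Z x ∂μ) - s) ≤ cvarObjective α Z μ s := by
  have h : ∫ x, Z x - s ∂μ ≤ ∫ x, max (Z x - s) 0 ∂μ :=
    integral_mono (hZ.sub (integrable_const s)) (hZ.posPart_sub_const s)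
      fun x => le_max_left _ _
  rw [integral_sub hZ (integrable_const s), integral_const, probReal_univ, one_smul] at h
  exact add_le_add_right (mul_le_mul_of_nonneg_left h (inv_nonneg.2 hα)) s

lemma integral_le_cvarObjective [IsProbabilityMeasure μ] (hα : α ∈ Ioc (0 : ℝ) 1)
    (hZ : Integrable Z μ) (s : ℝ) : ∫ x, Z x ∂μ ≤ cvarObjective α Z μ s := by
  rcases le_total (∫ x, Z x ∂μ) s with h | h
  · exact h.trans (le_cvarObjective hα.1.le s)
  · have hα' : 1 ≤ α⁻¹ := one_le_inv_iff₀.2 hα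
    have := add_inv_mul_integral_sub_le_cvarObjective hα.1.le hZ s
    nlinarith

lemma isBounded_setOf_cvarObjective_le [IsProbabilityMeasure μ] (hα : α ∈ Ioo (0 : ℝ) 1)
    (hZ : Integrable Z μ) (θ : ℝ) : Bornology.IsBounded {s | cvarObjective α Z μ s ≤ θ} := by
  refine (Metric.isBounded_Icc ((∫ x, Z x ∂μ - α * θ) / (1 - α)) θ).subset fun s hs => ?_
  have hlow := (add_inv_mul_integral_sub_le_cvarObjective hα.1.le hZ s).trans hs
  refine ⟨?_, (le_cvarObjective hα.1.le s).trans hs⟩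
  rw [div_le_iff₀ (sub_pos.2 hα.2)]
  have := mul_le_mul_of_nonneg_left hlow hα.1.le
  rw [mul_add, ← mul_assoc, mul_inv_cancel₀ hα.1.ne', one_mul] at this
  linarith

lemma convexOn_cvarObjective [IsFiniteMeasure μ] (hα : 0 ≤ α) (hZ : Integrable Z μ) :
    ConvexOn ℝ univ (cvarObjective α Z μ) := by
  have hpos (x : X) : ConvexOn ℝ univ fun s => max (Z x - s) 0 :=
    ((convexOn_const (Z x) convex_univ).sub (concaveOn_id convex_univ)).sup
      (convexOn_const 0 convex_univ)
  have hint : ConvexOn ℝ univ fun s => ∫ x, max (Z x - s) 0 ∂μ := by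
    refine ⟨convex_univ, fun s _ t _ a b ha hb hab => ?_⟩
    simp only [smul_eq_mul]
    rw [← integral_const_mul, ← integral_const_mul, ← integral_add
      ((hZ.posPart_sub_const s).const_mul a) ((hZ.posPart_sub_const t).const_mul b)]
    exact integral_mono (hZ.posPart_sub_const _)
      (((hZ.posPart_sub_const s).const_mul a).add ((hZ.posPart_sub_const t).const_mul b))
      fun x => (hpos x).2 (mem_univ s) (mem_univ t) ha hb hab
  exact (convexOn_id convex_univ).add (hint.smul (inv_nonneg.2 hα))

lemma lipschitzWith_cvarObjective [IsProbabilityMeasure μ] (hZ : Integrable Z μ) :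
    LipschitzWith (1 + ‖α⁻¹‖₊) (cvarObjective α Z μ) := by
  refine LipschitzWith.of_dist_le_mul fun s t => ?_
  have hint : dist (∫ x, max (Z x - s) 0 ∂μ) (∫ x, max (Z x - t) 0 ∂μ) ≤ dist s t := by
    rw [dist_eq_norm, ← integral_sub (hZ.posPart_sub_const s) (hZ.posPart_sub_const t)]
    simpa using norm_integral_le_of_norm_le_const (μ := μ) (C := dist s t)
      (f := fun x => max (Z x - s) 0 - max (Z x - t) 0)
      (Filter.Eventually.of_forall fun x => by
        simpa [Real.dist_eq, abs_sub_comm s t] using abs_max_sub_max_le_abs (Z x - s) (Z x - t) 0)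
  calc dist (cvarObjective α Z μ s) (cvarObjective α Z μ t)
      ≤ dist s t + dist (α⁻¹ * ∫ x, max (Z x - s) 0 ∂μ) (α⁻¹ * ∫ x, max (Z x - t) 0 ∂μ) :=
        dist_add_add_le _ _ _ _
    _ ≤ dist s t + ‖α⁻¹‖ * dist s t := by
        rw [dist_eq_norm (α⁻¹ * _), ← mul_sub, norm_mul, ← dist_eq_norm]
        gcongr
    _ = (1 + ‖α⁻¹‖₊ : NNReal) * dist s t := by push_cast; ring

lemma cvarObjective_mixture [IsFiniteMeasure μ] [IsFiniteMeasure ν] {t : ℝ}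
    (ht : t ∈ Icc (0 : ℝ) 1) (hZμ : Integrable Z μ) (hZν : Integrable Z ν) (s : ℝ) :
    cvarObjective α Z (mixture t μ ν) s
      = (1 - t) * cvarObjective α Z μ s + t * cvarObjective α Z ν s := by
  simp only [cvarObjective]
  rw [integral_mixture ht (hZμ.posPart_sub_const s) (hZν.posPart_sub_const s), smul_eq_mul,
    smul_eq_mul]
  ring

end CVaR

section MomentSet

variable {n : ℕ} {m : Fin n → ℝ} {S : Matrix (Fin n) (Fin n) ℝ}

instance (μ : momentSet n m S) : IsProbabilityMeasure (μ : Measure (Fin n → ℝ)) := μ.2.1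

lemma memLp_two_of_mem_momentSet {μ : Measure (Fin n → ℝ)} (hμ : μ ∈ momentSet n m S) :
    MemLp (fun x => x) 2 μ :=
  (memLp_two_iff_integrable_sq_norm aestronglyMeasurable_id).2 hμ.2.1

lemma integrable_cov_of_mem_momentSet {μ : Measure (Fin n → ℝ)} (hμ : μ ∈ momentSet n m S)
    (i j : Fin n) : Integrable (fun x : Fin n → ℝ => (x i - m i) * (x j - m j)) μ := by
  have := hμ.1
  have hcoord (k : Fin n) : MemLp (fun x : Fin n → ℝ => x k - m k) 2 μ :=
    ((ContinuousLinearMap.proj (R := ℝ) (φ := fun _ : Fin n => ℝ) k).comp_memLp'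
      (memLp_two_of_mem_momentSet hμ)).sub (memLp_const _)
  exact (hcoord i).integrable_mul (hcoord j)

lemma mixture_mem_momentSet {μ ν : Measure (Fin n → ℝ)} (hμ : μ ∈ momentSet n m S)
    (hν : ν ∈ momentSet n m S) {t : ℝ} (ht : t ∈ Icc (0 : ℝ) 1) :
    mixture t μ ν ∈ momentSet n m S := by
  have := hμ.1; have := hν.1
  refine ⟨isProbabilityMeasure_mixture ht, Integrable.mixture hμ.2.1 hν.2.1, ?_, fun i j => ?_⟩
  · rw [integral_mixture ht ((memLp_two_of_mem_momentSet hμ).integrable one_le_two)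
      ((memLp_two_of_mem_momentSet hν).integrable one_le_two), hμ.2.2.1, hν.2.2.1, ← add_smul]
    simp
  · rw [integral_mixture ht (integrable_cov_of_mem_momentSet hμ i j)
      (integrable_cov_of_mem_momentSet hν i j), hμ.2.2.2 i j, hν.2.2.2 i j, smul_eq_mul,
      smul_eq_mul]
    ring

end MomentSet

theorem worst_case_cvar_minimax_general
    (n : ℕ) (m : Fin n → ℝ) (S : Matrix (Fin n) (Fin n) ℝ)
    (α : ℝ) (hα : α ∈ Set.Ioo (0 : ℝ) 1)
    (Z : (Fin n → ℝ) → ℝ)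
    (hZint : ∀ μ ∈ momentSet n m S, Integrable Z μ) :
    (⨆ μ : momentSet n m S, ⨅ s : ℝ, (s + α⁻¹ * ∫ x, max (Z x - s) 0 ∂μ.1))
      = ⨅ s : ℝ, ⨆ μ : momentSet n m S,
          (s + α⁻¹ * ∫ x, max (Z x - s) 0 ∂μ.1) := by
  have hZ (μ : momentSet n m S) : Integrable Z μ := hZint μ μ.2
  refine iSup_iInf_eq_iInf_iSup_of_forall_exists_lt
    (fun μ : momentSet n m S => cvarObjective α Z μ) (fun μ => lipschitzWith_cvarObjective (hZ μ))
    (fun μ => ⟨_, forall_mem_range.2 (integral_le_cvarObjective (Ioo_subset_Ioc_self hα) (hZ μ))⟩)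
    fun θ hθ => ConvexOn.exists_forall_le_of_forall_exists_mix_le
      (fun μ => convexOn_cvarObjective hα.1.le (hZ μ))
      (fun μ => isBounded_setOf_cvarObjective_le hα (hZ μ) θ) fun μ ν t ht => ?_
  obtain ⟨s, hs⟩ := hθ ⟨mixture t μ ν, mixture_mem_momentSet μ.2 ν.2 ht⟩
  exact ⟨s, (cvarObjective_mixture ht (hZ μ) (hZ ν) s).symm.trans_le hs.le⟩

/-- Stochastic saddle point property (Shapiro–Kleywegt): for the worst-case
CVaR over a moment-based ambiguity set, the supremum over the ambiguity set and
the infimum in the CVaR definition can be interchanged. -/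
theorem worst_case_cvar_minimax
    (n : ℕ) (m : Fin n → ℝ) (S : Matrix (Fin n) (Fin n) ℝ) (hS : S.PosSemidef)
    (α : ℝ) (hα : α ∈ Set.Ioo (0 : ℝ) 1)
    (Z : (Fin n → ℝ) → ℝ) (hZmeas : Measurable Z)
    (hZint : ∀ μ ∈ momentSet n m S, Integrable Z μ) :
    (⨆ μ : momentSet n m S, ⨅ s : ℝ, (s + α⁻¹ * ∫ x, max (Z x - s) 0 ∂μ.1))
      = ⨅ s : ℝ, ⨆ μ : momentSet n m S,
          (s + α⁻¹ * ∫ x, max (Z x - s) 0 ∂μ.1) :=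
  worst_case_cvar_minimax_general n m S α hα Z hZint
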